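/- arXiv:1707.08505 — 5 statements merged into one kernel-verified Lean document; each statement's English description precedes it below -/
import Mathlib

section
/- For every δ ∈ (−1/2, 0) ∪ (0, 1/2), the function y ↦ ((y+1)^δ − y^δ)² is integrable on (0,∞), i.e. ∫₀^∞ ((y+1)^δ − y^δ)² dy < ∞. -/
/-! Near `0` the integrand is at most `2 ((y + 1) ^ (2δ) + y ^ (2δ))`, integrable because
`2δ > -1`. Near `∞` the mean value theorem gives `|(y + 1) ^ δ - y ^ δ| ≤ |δ| y ^ (δ - 1)`, so the
integrand is `O(y ^ (2δ - 2))`, integrable because `2δ - 2 < -1`. -/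

open MeasureTheory Set

lemma abs_rpow_add_one_sub_rpow_le {δ y : ℝ} (hδ : δ ≤ 1) (hy : 0 < y) :
    |(y + 1) ^ δ - y ^ δ| ≤ |δ| * y ^ (δ - 1) := by
  have hpos : ∀ x ∈ Icc y (y + 1), x ≠ 0 := fun x hx => (hy.trans_le hx.1).ne'
  obtain ⟨c, hc, hslope⟩ := exists_hasDerivAt_eq_slope (fun x : ℝ => x ^ δ)
    (fun x => δ * x ^ (δ - 1)) (lt_add_one y)
    (continuousOn_id.rpow_const fun x hx => Or.inl (hpos x hx))
    (fun x hx => Real.hasDerivAt_rpow_const (Or.inl (hpos x (Ioo_subset_Icc_self hx))))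
  rw [add_sub_cancel_left, div_one] at hslope
  rw [← hslope, abs_mul, abs_of_nonneg (Real.rpow_nonneg (hy.trans hc.1).le _)]
  exact mul_le_mul_of_nonneg_left
    (Real.rpow_le_rpow_of_nonpos hy hc.1.le (by linarith)) (abs_nonneg δ)

lemma continuousOn_rpow_add_one_sub_rpow_sq (δ : ℝ) :
    ContinuousOn (fun y : ℝ => ((y + 1) ^ δ - y ^ δ) ^ 2) (Ioi 0) := by
  refine (ContinuousOn.sub ?_ ?_).pow 2
  · exact (continuousOn_id.add continuousOn_const).rpow_const
      fun x hx => Or.inl (by simp only [Pi.add_apply, id]; linarith [mem_Ioi.1 hx])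
  · exact continuousOn_id.rpow_const fun x hx => Or.inl (ne_of_gt hx)

lemma integrableOn_Ioc_rpow_add_one_sub_rpow_sq {δ : ℝ} (hδ : -(1 / 2) < δ) (b : ℝ) :
    IntegrableOn (fun y : ℝ => ((y + 1) ^ δ - y ^ δ) ^ 2) (Ioc 0 b) := by
  have hpow : IntegrableOn (fun y : ℝ => y ^ (δ * 2)) (Ioc 0 b) :=
    (intervalIntegral.intervalIntegrable_rpow' (by linarith)).1
  have hcont : ContinuousOn (fun y : ℝ => (y + 1) ^ (δ * 2)) (Icc 0 b) :=
    (continuousOn_id.add continuousOn_const).rpow_const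
      fun x hx => Or.inl (by simp only [Pi.add_apply, id]; linarith [hx.1])
  have hshift : IntegrableOn (fun y : ℝ => (y + 1) ^ (δ * 2)) (Ioc 0 b) :=
    hcont.integrableOn_Icc.mono_set Ioc_subset_Icc_self
  refine Integrable.mono' ((hshift.add hpow).const_mul 2)
    ((continuousOn_rpow_add_one_sub_rpow_sq δ).mono Ioc_subset_Ioi_self
      |>.aestronglyMeasurable measurableSet_Ioc) ?_
  filter_upwards [ae_restrict_mem measurableSet_Ioc] with y hy
  rw [Real.norm_of_nonneg (sq_nonneg _), Pi.add_apply, Real.rpow_mul hy.1.le,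
    Real.rpow_mul (by linarith [hy.1]), Real.rpow_two, Real.rpow_two]
  nlinarith [sq_nonneg ((y + 1) ^ δ + y ^ δ)]

lemma integrableOn_Ioi_rpow_add_one_sub_rpow_sq {δ : ℝ} (hδ : δ < 1 / 2) {b : ℝ} (hb : 0 < b) :
    IntegrableOn (fun y : ℝ => ((y + 1) ^ δ - y ^ δ) ^ 2) (Ioi b) := by
  refine Integrable.mono'
    ((integrableOn_Ioi_rpow_of_lt (by linarith : (δ - 1) * 2 < -1) hb).const_mul (δ ^ 2))
    ((continuousOn_rpow_add_one_sub_rpow_sq δ).mono (Ioi_subset_Ioi hb.le)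
      |>.aestronglyMeasurable measurableSet_Ioi) ?_
  filter_upwards [ae_restrict_mem measurableSet_Ioi] with y hy
  have hy0 : 0 < y := hb.trans hy
  calc ‖((y + 1) ^ δ - y ^ δ) ^ 2‖ = |(y + 1) ^ δ - y ^ δ| ^ 2 := by simp
    _ ≤ (|δ| * y ^ (δ - 1)) ^ 2 := by
      gcongr; exact abs_rpow_add_one_sub_rpow_le (by linarith) hy0
    _ = δ ^ 2 * y ^ ((δ - 1) * 2) := by
      rw [mul_pow, sq_abs, Real.rpow_mul hy0.le, Real.rpow_two]

theorem integrable_power_increment_sq_general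
    (δ : ℝ) (hδ1 : -(1/2) < δ) (hδ2 : δ < 1/2) :
    IntegrableOn (fun y : ℝ => ((y + 1) ^ δ - y ^ δ) ^ 2) (Set.Ioi 0) := by
  rw [← Ioc_union_Ioi_eq_Ioi zero_le_one]
  exact (integrableOn_Ioc_rpow_add_one_sub_rpow_sq hδ1 1).union
    (integrableOn_Ioi_rpow_add_one_sub_rpow_sq hδ2 one_pos)

/-- For `δ ∈ (-1/2, 0) ∪ (0, 1/2)`, the function `y ↦ ((y+1)^δ - y^δ)²` is
(Lebesgue-)integrable on `(0, ∞)`. -/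
theorem integrable_power_increment_sq
    (δ : ℝ) (hδ1 : -(1/2) < δ) (hδ2 : δ < 1/2) (hδ0 : δ ≠ 0) :
    IntegrableOn (fun y : ℝ => ((y + 1) ^ δ - y ^ δ) ^ 2) (Set.Ioi 0) :=
  integrable_power_increment_sq_general δ hδ1 hδ2
end

section
/- Let δ ∈ (−1/2, 0) ∪ (0, 1/2) and let g(x) = x^δ for x > 0. Then for every b > 0 and every Δ > 0, ∫₀^b (g(x+Δ) − g(x))² dx ≤ Δ^(2δ+1) · ∫₀^∞ ((y+1)^δ − y^δ)² dy, and in particular ∫₀^b (g(x+Δ) − g(x))² dx = O(Δ^(2δ+1)) as Δ → 0⁺. -/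
open MeasureTheory Set Filter Asymptotics

/-- Mean value theorem bound for the increment of the power function. -/
lemma power_kernel_mvt_bound {δ : ℝ} (hδ2 : δ < 1/2) {y : ℝ} (hy : 0 < y) :
    |(y + 1) ^ δ - y ^ δ| ≤ |δ| * y ^ (δ - 1) := by
  have hconv : Convex ℝ (Set.Icc y (y + 1)) := convex_Icc _ _
  have hderiv : ∀ t ∈ Set.Icc y (y + 1),
      HasDerivWithinAt (fun t : ℝ => t ^ δ) ((fun t : ℝ => δ * t ^ (δ - 1)) t)
        (Set.Icc y (y + 1)) t := by
    intro t ht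
    exact (Real.hasDerivAt_rpow_const (Or.inl (by nlinarith [ht.1]))).hasDerivWithinAt
  have hbound : ∀ t ∈ Set.Icc y (y + 1),
      ‖(fun t : ℝ => δ * t ^ (δ - 1)) t‖ ≤ |δ| * y ^ (δ - 1) := by
    intro t ht
    have htpos : 0 < t := lt_of_lt_of_le hy ht.1
    rw [Real.norm_eq_abs, abs_mul, abs_of_nonneg (Real.rpow_nonneg htpos.le _)]
    have : t ^ (δ - 1) ≤ y ^ (δ - 1) :=
      Real.rpow_le_rpow_of_nonpos hy ht.1 (by linarith)
    exact mul_le_mul_of_nonneg_left this (abs_nonneg δ)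
  have := hconv.norm_image_sub_le_of_norm_hasDerivWithin_le hderiv hbound
    (Set.left_mem_Icc.mpr (by linarith)) (Set.right_mem_Icc.mpr (by linarith))
  simpa using this

/-- Integrability of the reference integrand. -/
lemma power_kernel_integrable {δ : ℝ} (hδ1 : -(1/2) < δ) (hδ2 : δ < 1/2) :
    IntegrableOn (fun y : ℝ => ((y + 1) ^ δ - y ^ δ) ^ 2) (Set.Ioi 0) := by
  have hmeas : Measurable (fun y : ℝ => ((y + 1) ^ δ - y ^ δ) ^ 2) := by
    fun_prop
  have h1 : IntegrableOn (fun y : ℝ => ((y + 1) ^ δ - y ^ δ) ^ 2) (Set.Ioc 0 1) := by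
    have hg1 : IntegrableOn (fun y : ℝ => 2 * (y + 1) ^ (2 * δ) + 2 * y ^ (2 * δ))
        (Set.Ioc 0 1) := by
      apply Integrable.add
      · have hc : ContinuousOn (fun y : ℝ => 2 * (y + 1) ^ (2 * δ)) (Set.Icc 0 1) := by
          apply ContinuousOn.mul continuousOn_const
          apply ContinuousOn.rpow_const (by fun_prop)
          intro x hx
          exact Or.inl (by nlinarith [hx.1])
        exact (hc.integrableOn_Icc).mono_set Set.Ioc_subset_Icc_self
      · have := (intervalIntegral.intervalIntegrable_rpow'
          (show (-1 : ℝ) < 2 * δ by linarith) (a := 0) (b := 1))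
        rw [intervalIntegrable_iff_integrableOn_Ioc_of_le (by norm_num)] at this
        exact this.const_mul 2
    apply MeasureTheory.Integrable.mono hg1 (hmeas.aestronglyMeasurable.restrict)
    filter_upwards [ae_restrict_mem measurableSet_Ioc] with y hy
    have hy0 : 0 < y := hy.1
    have ha : (y + 1) ^ (2 * δ) = ((y + 1) ^ δ) ^ 2 := by
      rw [mul_comm, Real.rpow_mul (by linarith), Real.rpow_two]
    have hb : y ^ (2 * δ) = (y ^ δ) ^ 2 := by
      rw [mul_comm, Real.rpow_mul hy0.le, Real.rpow_two]
    rw [Real.norm_eq_abs, Real.norm_eq_abs, abs_of_nonneg (sq_nonneg _)]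
    have h2 : 0 ≤ (y : ℝ) ^ (2 * δ) := Real.rpow_nonneg hy0.le _
    have h3 : 0 ≤ ((y : ℝ) + 1) ^ (2 * δ) := Real.rpow_nonneg (by linarith) _
    rw [abs_of_nonneg (by positivity), ha, hb]
    nlinarith [sq_nonneg ((y + 1) ^ δ + y ^ δ)]
  have h2 : IntegrableOn (fun y : ℝ => ((y + 1) ^ δ - y ^ δ) ^ 2) (Set.Ioi 1) := by
    have hg2 : IntegrableOn (fun y : ℝ => δ ^ 2 * y ^ (2 * δ - 2)) (Set.Ioi 1) :=
      (integrableOn_Ioi_rpow_of_lt (show 2 * δ - 2 < -1 by linarith) one_pos).const_mul _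
    apply MeasureTheory.Integrable.mono hg2 (hmeas.aestronglyMeasurable.restrict)
    filter_upwards [ae_restrict_mem measurableSet_Ioi] with y hy
    have hy0 : (0 : ℝ) < y := lt_trans one_pos hy
    have hkey := power_kernel_mvt_bound hδ2 hy0
    have hsq : ((y + 1) ^ δ - y ^ δ) ^ 2 ≤ (|δ| * y ^ (δ - 1)) ^ 2 := by
      rw [← sq_abs ((y + 1) ^ δ - y ^ δ)]
      exact pow_le_pow_left₀ (abs_nonneg _) hkey 2
    have hrw : (|δ| * y ^ (δ - 1)) ^ 2 = δ ^ 2 * y ^ (2 * δ - 2) := by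
      rw [mul_pow, sq_abs]
      congr 1
      rw [← Real.rpow_two, ← Real.rpow_mul hy0.le]
      ring_nf
    rw [Real.norm_eq_abs, Real.norm_eq_abs, abs_of_nonneg (sq_nonneg _),
      abs_of_nonneg (by positivity)]
    calc ((y + 1) ^ δ - y ^ δ) ^ 2 ≤ (|δ| * y ^ (δ - 1)) ^ 2 := hsq
      _ = δ ^ 2 * y ^ (2 * δ - 2) := hrw
  have : Set.Ioc (0 : ℝ) 1 ∪ Set.Ioi 1 = Set.Ioi 0 := Set.Ioc_union_Ioi_eq_Ioi (by norm_num)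
  rw [← this]
  exact h1.union h2

/-- Main inequality. -/
lemma power_kernel_main_ineq {δ : ℝ} (hδ1 : -(1/2) < δ) (hδ2 : δ < 1/2)
    (b : ℝ) (hb : 0 < b) (Δ : ℝ) (hΔ : 0 < Δ) :
    (∫ x in Set.Ioc (0:ℝ) b, ((x + Δ) ^ δ - x ^ δ) ^ 2)
      ≤ Δ ^ (2 * δ + 1) * ∫ y in Set.Ioi (0:ℝ), ((y + 1) ^ δ - y ^ δ) ^ 2 := by
  set G : ℝ → ℝ := fun y => ((y + 1) ^ δ - y ^ δ) ^ 2 with hG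
  set F : ℝ → ℝ := fun x => ((x + Δ) ^ δ - x ^ δ) ^ 2 with hF
  have hGint := power_kernel_integrable hδ1 hδ2
  have hcomp : (∫ y in (0:ℝ)..(b / Δ), F (Δ * y)) = Δ⁻¹ • ∫ x in (Δ * 0)..(Δ * (b / Δ)), F x :=
    intervalIntegral.integral_comp_mul_left F hΔ.ne'
  have hΔb : Δ * (b / Δ) = b := by field_simp
  rw [mul_zero, hΔb] at hcomp
  have step1 : (∫ x in Set.Ioc (0:ℝ) b, F x) = Δ * ∫ y in Set.Ioc (0:ℝ) (b / Δ), F (Δ * y) := by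
    rw [← intervalIntegral.integral_of_le hb.le,
      ← intervalIntegral.integral_of_le (by positivity : (0:ℝ) ≤ b / Δ), hcomp,
      smul_eq_mul, ← mul_assoc, mul_inv_cancel₀ hΔ.ne', one_mul]
  have hpow2 : (Δ ^ δ) ^ 2 = Δ ^ (2 * δ) := by
    rw [← Real.rpow_two, ← Real.rpow_mul hΔ.le]
    ring_nf
  have step2 : (∫ y in Set.Ioc (0:ℝ) (b / Δ), F (Δ * y))
      = Δ ^ (2 * δ) * ∫ y in Set.Ioc (0:ℝ) (b / Δ), G y := by
    rw [← MeasureTheory.integral_const_mul]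
    apply MeasureTheory.setIntegral_congr_fun measurableSet_Ioc
    intro y hy
    have hy0 : 0 < y := hy.1
    have e1 : Δ * y + Δ = Δ * (y + 1) := by ring
    have e2 : (Δ * (y + 1)) ^ δ = Δ ^ δ * (y + 1) ^ δ := Real.mul_rpow hΔ.le (by linarith)
    have e3 : (Δ * y) ^ δ = Δ ^ δ * y ^ δ := Real.mul_rpow hΔ.le hy0.le
    simp only [hF, hG, e1, e2, e3]
    rw [← hpow2]
    ring
  have step3 : (∫ y in Set.Ioc (0:ℝ) (b / Δ), G y) ≤ ∫ y in Set.Ioi (0:ℝ), G y := by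
    apply MeasureTheory.setIntegral_mono_set hGint
    · filter_upwards with y using sq_nonneg _
    · exact HasSubset.Subset.eventuallyLE Set.Ioc_subset_Ioi_self
  have hΔpow : Δ * Δ ^ (2 * δ) = Δ ^ (2 * δ + 1) := by
    rw [Real.rpow_add hΔ, Real.rpow_one]; ring
  calc (∫ x in Set.Ioc (0:ℝ) b, F x)
      = Δ ^ (2 * δ + 1) * ∫ y in Set.Ioc (0:ℝ) (b / Δ), G y := by
        rw [step1, step2, ← mul_assoc, hΔpow]
    _ ≤ Δ ^ (2 * δ + 1) * ∫ y in Set.Ioi (0:ℝ), G y := by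
        apply mul_le_mul_of_nonneg_left step3 (Real.rpow_nonneg hΔ.le _)

/-- For the power kernel `g x = x ^ δ` with `δ ∈ (-1/2, 0) ∪ (0, 1/2)`:
for every `b > 0` and `Δ > 0`,
`∫₀^b (g (x+Δ) - g x)² dx ≤ Δ ^ (2δ+1) * ∫₀^∞ ((y+1)^δ - y^δ)² dy`,
and in particular `∫₀^b (g (x+Δ) - g x)² dx = O(Δ ^ (2δ+1))` as `Δ → 0⁺`. -/
theorem power_kernel_increment_bound
    (δ : ℝ) (hδ1 : -(1/2) < δ) (hδ2 : δ < 1/2) (hδ0 : δ ≠ 0) :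
    (∀ b : ℝ, 0 < b → ∀ Δ : ℝ, 0 < Δ →
      (∫ x in Set.Ioc (0:ℝ) b, ((x + Δ) ^ δ - x ^ δ) ^ 2)
        ≤ Δ ^ (2 * δ + 1) * ∫ y in Set.Ioi (0:ℝ), ((y + 1) ^ δ - y ^ δ) ^ 2) ∧
    (∀ b : ℝ, 0 < b →
      (fun Δ : ℝ => ∫ x in Set.Ioc (0:ℝ) b, ((x + Δ) ^ δ - x ^ δ) ^ 2)
        =O[nhdsWithin 0 (Set.Ioi 0)] (fun Δ : ℝ => Δ ^ (2 * δ + 1))) := by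
  constructor
  · intro b hb Δ hΔ
    exact power_kernel_main_ineq hδ1 hδ2 b hb Δ hΔ
  · intro b hb
    set C : ℝ := ∫ y in Set.Ioi (0:ℝ), ((y + 1) ^ δ - y ^ δ) ^ 2 with hC
    have hC0 : 0 ≤ C := MeasureTheory.setIntegral_nonneg measurableSet_Ioi
      (fun y _ => sq_nonneg _)
    rw [isBigO_iff]
    refine ⟨C, ?_⟩
    filter_upwards [eventually_mem_nhdsWithin] with Δ hΔ
    have hΔ0 : (0:ℝ) < Δ := hΔ
    have hlhs0 : 0 ≤ ∫ x in Set.Ioc (0:ℝ) b, ((x + Δ) ^ δ - x ^ δ) ^ 2 :=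
      MeasureTheory.setIntegral_nonneg measurableSet_Ioc (fun x _ => sq_nonneg _)
    rw [Real.norm_eq_abs, Real.norm_eq_abs, abs_of_nonneg hlhs0,
      abs_of_nonneg (Real.rpow_nonneg hΔ0.le _)]
    calc (∫ x in Set.Ioc (0:ℝ) b, ((x + Δ) ^ δ - x ^ δ) ^ 2)
        ≤ Δ ^ (2 * δ + 1) * C := power_kernel_main_ineq hδ1 hδ2 b hb Δ hΔ0
      _ = C * Δ ^ (2 * δ + 1) := mul_comm _ _
end

section
/- Let λ > 0 and δ ∈ (−1/2, 0) ∪ (0, 1/2], and let g(x) = x^δ e^(−λx) for x > 0 be the Gamma kernel, with derivative g′(x) = (δ x^(δ−1) − λ x^δ) e^(−λx). Then g′ is not square-integrable near zero: ∫₀^1 (g′(x))² dx = +∞. In particular g′ ∉ L²((0,∞)). -/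
open MeasureTheory Set Filter Topology

/-!
Writing the derivative as `x ^ (δ - 1) * ((δ - l x) e^(-l x))`, its square is
`x ^ (2δ - 2)` times a continuous factor tending to `δ² > 0` at `0`. Hence near `0` it dominates
a positive multiple of `x ^ (2δ - 2)`, which is not integrable at `0` since `2δ - 2 ≤ -1`.
-/

lemma setLIntegral_Ioo_rpow_eq_top {s ε : ℝ} (hs : s ≤ -1) (hε : 0 < ε) :
    ∫⁻ x in Ioo 0 ε, ENNReal.ofReal (x ^ s) = ⊤ := by
  by_contra h
  have hnonneg : 0 ≤ᵐ[volume.restrict (Ioo 0 ε)] fun x : ℝ ↦ x ^ s :=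
    ae_restrict_of_forall_mem measurableSet_Ioo fun x hx ↦ Real.rpow_nonneg hx.1.le s
  have hint : IntegrableOn (fun x : ℝ ↦ x ^ s) (Ioo 0 ε) :=
    (lintegral_ofReal_ne_top_iff_integrable (by fun_prop) hnonneg).1 h
  exact hs.not_gt ((intervalIntegral.integrableOn_Ioo_rpow_iff hε).1 hint)

lemma setLIntegral_Ioc_eq_top_of_eventually_rpow_le {f : ℝ → ℝ} {c s b : ℝ} (hc : 0 < c)
    (hs : s ≤ -1) (hb : 0 < b) (hf : ∀ᶠ x in 𝓝[>] 0, c * x ^ s ≤ f x) :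
    ∫⁻ x in Ioc 0 b, ENNReal.ofReal (f x) = ⊤ := by
  obtain ⟨ε, hε, hεf⟩ := mem_nhdsGT_iff_exists_Ioo_subset.1 (hf.and (Ioo_mem_nhdsGT hb))
  rw [eq_top_iff]
  calc ⊤ = ENNReal.ofReal c * ∫⁻ x in Ioo 0 ε, ENNReal.ofReal (x ^ s) := by
        rw [setLIntegral_Ioo_rpow_eq_top hs hε, ENNReal.mul_top (by simpa using hc)]
    _ = ∫⁻ x in Ioo 0 ε, ENNReal.ofReal (c * x ^ s) := by
        rw [← lintegral_const_mul' _ _ ENNReal.ofReal_ne_top]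
        refine setLIntegral_congr_fun measurableSet_Ioo fun x _ ↦ ?_
        rw [ENNReal.ofReal_mul hc.le]
    _ ≤ ∫⁻ x in Ioo 0 ε, ENNReal.ofReal (f x) :=
        setLIntegral_mono' measurableSet_Ioo fun x hx ↦ ENNReal.ofReal_le_ofReal (hεf hx).1
    _ ≤ ∫⁻ x in Ioc 0 b, ENNReal.ofReal (f x) :=
        lintegral_mono_set fun x hx ↦ Ioo_subset_Ioc_self (hεf hx).2

lemma gamma_kernel_deriv_sq_eq {l δ x : ℝ} (hx : 0 < x) :
    ((δ * x ^ (δ - 1) - l * x ^ δ) * Real.exp (-(l * x))) ^ 2 =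
      x ^ (2 * δ - 2) * ((δ - l * x) * Real.exp (-(l * x))) ^ 2 := by
  rw [show 2 * δ - 2 = (δ - 1) * (2 : ℕ) by push_cast; ring, Real.rpow_mul_natCast hx.le,
    Real.rpow_sub_one hx.ne']
  field_simp

lemma eventually_gamma_kernel_deriv_sq_ge (l : ℝ) {δ : ℝ} (hδ : δ ≠ 0) :
    ∀ᶠ x in 𝓝[>] 0, δ ^ 2 / 2 * x ^ (2 * δ - 2) ≤
      ((δ * x ^ (δ - 1) - l * x ^ δ) * Real.exp (-(l * x))) ^ 2 := by
  have hlim : Tendsto (fun x : ℝ ↦ ((δ - l * x) * Real.exp (-(l * x))) ^ 2) (𝓝 0) (𝓝 (δ ^ 2)) := by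
    have hcont : Continuous fun x : ℝ ↦ ((δ - l * x) * Real.exp (-(l * x))) ^ 2 := by fun_prop
    simpa using hcont.tendsto 0
  have hfactor := (hlim.eventually_const_lt (half_lt_self (by positivity)))
  filter_upwards [nhdsWithin_le_nhds hfactor, self_mem_nhdsWithin] with x hx hx0
  rw [gamma_kernel_deriv_sq_eq hx0, mul_comm]
  have := Real.rpow_nonneg (le_of_lt hx0) (2 * δ - 2)
  gcongr

theorem gamma_kernel_derivative_not_square_integrable_general
    (l δ : ℝ) (hδ2 : δ ≤ 1/2) (hδ0 : δ ≠ 0) :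
    (∫⁻ x in Set.Ioc (0:ℝ) 1,
        ENNReal.ofReal (((δ * x ^ (δ - 1) - l * x ^ δ) * Real.exp (-(l * x))) ^ 2)) = ⊤ ∧
    ¬ MemLp (fun x : ℝ => (δ * x ^ (δ - 1) - l * x ^ δ) * Real.exp (-(l * x))) 2
        (volume.restrict (Set.Ioi 0)) := by
  have hIoc := setLIntegral_Ioc_eq_top_of_eventually_rpow_le (by positivity) (by linarith)
    one_pos (eventually_gamma_kernel_deriv_sq_ge l hδ0)
  refine ⟨hIoc, fun hmem ↦ ?_⟩
  have hint : IntegrableOn (fun x ↦ ((δ * x ^ (δ - 1) - l * x ^ δ) * Real.exp (-(l * x))) ^ 2)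
      (Ioc 0 1) :=
    hmem.integrable_sq.mono_measure (Measure.restrict_mono Ioc_subset_Ioi_self le_rfl)
  exact hint.lintegral_lt_top.ne hIoc

/-- For the Gamma kernel `g x = x ^ δ * exp (-l x)` with `l > 0` and
`δ ∈ (-1/2, 0) ∪ (0, 1/2]`, the derivative
`g' x = (δ x ^ (δ-1) - l x ^ δ) * exp (-l x)` is not square-integrable near zero:
`∫₀¹ (g' x)² dx = ∞`, and in particular `g' ∉ L²((0,∞))`. -/
theorem gamma_kernel_derivative_not_square_integrable
    (l δ : ℝ) (hl : 0 < l) (hδ1 : -(1/2) < δ) (hδ2 : δ ≤ 1/2) (hδ0 : δ ≠ 0) :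
    (∫⁻ x in Set.Ioc (0:ℝ) 1,
        ENNReal.ofReal (((δ * x ^ (δ - 1) - l * x ^ δ) * Real.exp (-(l * x))) ^ 2)) = ⊤ ∧
    ¬ MemLp (fun x : ℝ => (δ * x ^ (δ - 1) - l * x ^ δ) * Real.exp (-(l * x))) 2
        (volume.restrict (Set.Ioi 0)) :=
  gamma_kernel_derivative_not_square_integrable_general l δ hδ2 hδ0
end

section
/- Let g⁽¹⁾, g⁽²⁾ : (0,∞) → [0,∞) be measurable functions such that for j = 1, 2 and all x > 0, ∫₀^x (g⁽ʲ⁾(s))² ds = x^(2δ⁽ʲ⁾+1) · L⁽ʲ⁾(x), where δ⁽ʲ⁾ ∈ (−1/2, 1/2) and L⁽ʲ⁾ : (0,∞) → (0,∞) is continuous and slowly varying at zero. Let α ∈ (0,1] and let ρ : ℝ → ℝ be α-Hölder continuous with α + δ⁽¹⁾ + δ⁽²⁾ > 0. Then, writing Δ_n = 1/n, Σ_{i=1}^n ∫_{(i−1)Δ_n}^{iΔ_n} g⁽¹⁾(iΔ_n − s) · g⁽²⁾(iΔ_n − s) · (ρ(s) − ρ((i−1)Δ_n)) ds → 0 as n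 → ∞. -/
/-!
By Hölder continuity each block is at most `K Δ^α ∫₀^Δ g⁽¹⁾ g⁽²⁾` (reflect `s ↦ iΔ - s`), so the
sum is at most `K Δ^(α-1) ∫₀^Δ g⁽¹⁾ g⁽²⁾`, which Cauchy–Schwarz bounds by
`K √(Δ^e L⁽¹⁾(Δ) · Δ^e L⁽²⁾(Δ))` with `e = α + δ⁽¹⁾ + δ⁽²⁾ > 0`. This tends to zero because
slow variation gives `L(t/2) ≤ 2^γ L(t)` near zero for every `γ > 0`; iterated dyadically from an
interval where the continuous `L` is bounded, this yields `L(t) ≤ C t^(-γ)`.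
-/

open MeasureTheory Filter Set Topology

lemma le_mul_rpow_neg_of_half_le {f : ℝ → ℝ} {γ t₀ C : ℝ} (ht₀ : 0 < t₀)
    (hhalf : ∀ t ∈ Ioc 0 t₀, f (t / 2) ≤ 2 ^ γ * f t)
    (hbase : ∀ t ∈ Icc (t₀ / 2) t₀, f t ≤ C * t ^ (-γ)) :
    ∀ t ∈ Ioc 0 t₀, f t ≤ C * t ^ (-γ) := by
  have hdyadic : ∀ k : ℕ, ∀ t ∈ Icc (t₀ / 2 ^ (k + 1)) t₀, f t ≤ C * t ^ (-γ) := by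
    intro k
    induction k with
    | zero => simpa using hbase
    | succ k ih =>
      intro t ht
      rcases le_or_gt (t₀ / 2) t with hbig | hsmall
      · exact hbase t ⟨hbig, ht.2⟩
      have ht0 : 0 < t := (by positivity : 0 < t₀ / 2 ^ (k + 1 + 1)).trans_le ht.1
      have h2t : 2 * t ∈ Icc (t₀ / 2 ^ (k + 1)) t₀ := by
        have hlow := ht.1
        rw [div_le_iff₀ (by positivity), pow_succ] at hlow
        exact ⟨by rw [div_le_iff₀ (by positivity)]; linarith, by linarith⟩
      calc f t = f (2 * t / 2) := by rw [mul_div_cancel_left₀ t two_ne_zero]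
        _ ≤ 2 ^ γ * f (2 * t) := hhalf _ ⟨by positivity, h2t.2⟩
        _ ≤ 2 ^ γ * (C * (2 * t) ^ (-γ)) := by gcongr; exact ih _ h2t
        _ = C * t ^ (-γ) := by
          rw [Real.mul_rpow zero_le_two ht0.le, Real.rpow_neg zero_le_two]
          field_simp
  intro t ht
  obtain ⟨k, hk⟩ := pow_unbounded_of_one_lt (t₀ / t) one_lt_two
  refine hdyadic k t ⟨?_, ht.2⟩
  rw [div_lt_iff₀ ht.1] at hk
  rw [div_le_iff₀ (by positivity), pow_succ]
  nlinarith [ht.1]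

lemma exists_le_mul_rpow_neg_of_tendsto_half {L : ℝ → ℝ} (hLpos : ∀ x > 0, 0 < L x)
    (hLcont : ContinuousOn L (Ioi 0))
    (hhalf : Tendsto (fun t => L (1 / 2 * t) / L t) (𝓝[>] 0) (𝓝 1))
    {γ : ℝ} (hγ : 0 < γ) :
    ∃ C t₀, 0 < t₀ ∧ ∀ t ∈ Ioc 0 t₀, L t ≤ C * t ^ (-γ) := by
  have hev : ∀ᶠ t in 𝓝[>] 0, L (1 / 2 * t) / L t < 2 ^ γ :=
    hhalf.eventually_lt_const (Real.one_lt_rpow one_lt_two hγ)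
  obtain ⟨t₁, ht₁, hnear⟩ := (nhdsGT_basis (0 : ℝ)).eventually_iff.1 hev
  set t₀ := t₁ / 2
  have ht₀ : 0 < t₀ := half_pos ht₁
  obtain ⟨M, hM⟩ := isCompact_Icc.exists_bound_of_continuousOn
    (hLcont.mono fun t ht => (half_pos ht₀).trans_le ht.1 : ContinuousOn L (Icc (t₀ / 2) t₀))
  have hM0 : 0 ≤ M := (norm_nonneg _).trans (hM t₀ ⟨by linarith, le_rfl⟩)
  refine ⟨M * t₀ ^ γ, t₀, ht₀, le_mul_rpow_neg_of_half_le ht₀ (fun t ht => ?_) fun t ht => ?_⟩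
  · have hlt := hnear ⟨ht.1, ht.2.trans_lt (half_lt_self ht₁)⟩
    rw [div_lt_iff₀ (hLpos t ht.1), one_div_mul_eq_div] at hlt
    exact hlt.le
  · have ht0 : 0 < t := (half_pos ht₀).trans_le ht.1
    calc L t ≤ M := (le_abs_self _).trans (hM t ht)
      _ = M * t₀ ^ γ * t₀ ^ (-γ) := by
        rw [mul_assoc, ← Real.rpow_add ht₀, add_neg_cancel, Real.rpow_zero, mul_one]
      _ ≤ M * t₀ ^ γ * t ^ (-γ) := mul_le_mul_of_nonneg_left
        (Real.rpow_le_rpow_of_nonpos ht0 ht.2 (neg_nonpos.2 hγ.le)) (by positivity)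

lemma tendsto_rpow_mul_of_tendsto_half {L : ℝ → ℝ} (hLpos : ∀ x > 0, 0 < L x)
    (hLcont : ContinuousOn L (Ioi 0))
    (hhalf : Tendsto (fun t => L (1 / 2 * t) / L t) (𝓝[>] 0) (𝓝 1))
    {ε : ℝ} (hε : 0 < ε) :
    Tendsto (fun t => t ^ ε * L t) (𝓝[>] 0) (𝓝 0) := by
  obtain ⟨C, t₀, ht₀, hC⟩ := exists_le_mul_rpow_neg_of_tendsto_half hLpos hLcont hhalf (half_pos hε)
  have hroot : Tendsto (fun t : ℝ => C * t ^ (ε / 2)) (𝓝[>] 0) (𝓝 0) := by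
    have := ((Real.continuousAt_rpow_const 0 (ε / 2) (Or.inr (half_pos hε).le)).tendsto.mono_left
      (nhdsWithin_le_nhds (s := Ioi 0))).const_mul C
    rwa [Real.zero_rpow (half_pos hε).ne', mul_zero] at this
  refine squeeze_zero' ?_ ?_ hroot
  · filter_upwards [self_mem_nhdsWithin] with t ht
    exact mul_nonneg (Real.rpow_nonneg (le_of_lt ht) _) (hLpos t ht).le
  · filter_upwards [Ioo_mem_nhdsGT ht₀] with t ht
    calc t ^ ε * L t ≤ t ^ ε * (C * t ^ (-(ε / 2))) :=
          mul_le_mul_of_nonneg_left (hC t ⟨ht.1, ht.2.le⟩) (Real.rpow_nonneg ht.1.le _)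
      _ = C * t ^ (ε / 2) := by
        rw [mul_left_comm, ← Real.rpow_add ht.1]; ring_nf

section Reflection

variable {E : Type*} [NormedAddCommGroup E]

lemma integral_Ioc_comp_sub_left [NormedSpace ℝ E] (f : ℝ → E) {a b : ℝ} (hab : a ≤ b) :
    ∫ s in Ioc a b, f (b - s) = ∫ u in Ioc 0 (b - a), f u := by
  rw [← intervalIntegral.integral_of_le hab, ← intervalIntegral.integral_of_le (sub_nonneg.2 hab),
    intervalIntegral.integral_comp_sub_left, sub_self]

lemma MeasureTheory.IntegrableOn.comp_sub_left_Ioc {f : ℝ → E} {a b : ℝ} (hab : a ≤ b)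
    (hf : IntegrableOn f (Ioc 0 (b - a))) : IntegrableOn (fun s => f (b - s)) (Ioc a b) := by
  rw [← intervalIntegrable_iff_integrableOn_Ioc_of_le (sub_nonneg.2 hab)] at hf
  have := (hf.comp_sub_left b).symm
  rwa [sub_zero, sub_sub_cancel, intervalIntegrable_iff_integrableOn_Ioc_of_le hab] at this

end Reflection

lemma abs_integral_Ioc_mul_sub_le {h ρ : ℝ → ℝ} {a b K α : ℝ} (hab : a ≤ b) (hK : 0 ≤ K)
    (hα : 0 ≤ α) (hρ : ∀ u v, |ρ u - ρ v| ≤ K * |u - v| ^ α) (hh : ∀ x > 0, 0 ≤ h x)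
    (hint : IntegrableOn h (Ioc 0 (b - a))) :
    |∫ s in Ioc a b, h (b - s) * (ρ s - ρ a)| ≤ K * (b - a) ^ α * ∫ u in Ioc 0 (b - a), h u := by
  rw [← integral_Ioc_comp_sub_left _ hab, ← integral_const_mul, integral_Ioc_eq_integral_Ioo,
    integral_Ioc_eq_integral_Ioo, ← Real.norm_eq_abs]
  refine norm_integral_le_of_norm_le
    (((hint.comp_sub_left_Ioc hab).mono_set Ioo_subset_Ioc_self).const_mul _) ?_
  filter_upwards [ae_restrict_mem measurableSet_Ioo] with s hs
  rw [Real.norm_eq_abs, abs_mul, abs_of_nonneg (hh _ (sub_pos.2 hs.2)), mul_comm]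
  refine mul_le_mul_of_nonneg_right ((hρ s a).trans ?_) (hh _ (sub_pos.2 hs.2))
  rw [abs_of_pos (sub_pos.2 hs.1)]
  gcongr <;> linarith [hs.1, hs.2]

lemma abs_sum_integral_Ioc_mul_sub_le {h ρ : ℝ → ℝ} {K α : ℝ} (hK : 0 ≤ K) (hα : 0 ≤ α)
    (hρ : ∀ u v, |ρ u - ρ v| ≤ K * |u - v| ^ α) (hh : ∀ x > 0, 0 ≤ h x) {n : ℕ}
    (hint : IntegrableOn h (Ioc 0 (1 / n))) :
    |∑ i ∈ Finset.range n, ∫ s in Ioc ((i : ℝ) / n) (((i : ℝ) + 1) / n),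
        h (((i : ℝ) + 1) / n - s) * (ρ s - ρ ((i : ℝ) / n))|
      ≤ n * (K * (1 / n : ℝ) ^ α * ∫ u in Ioc 0 (1 / n : ℝ), h u) := by
  have hstep : ∀ i : ℕ, ((i : ℝ) + 1) / n - i / n = 1 / n := fun i => by ring
  refine (Finset.abs_sum_le_sum_abs _ _).trans ?_
  refine (Finset.sum_le_sum fun i _ => ?_).trans_eq
    (by rw [Finset.sum_const, Finset.card_range, nsmul_eq_mul])
  have hle : (i : ℝ) / n ≤ ((i : ℝ) + 1) / n := by gcongr; linarith
  simpa only [hstep] using abs_integral_Ioc_mul_sub_le hle hK hα hρ hh (by rwa [hstep])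

lemma integral_mul_le_sqrt_mul_sqrt {Ω : Type*} [MeasurableSpace Ω] {μ : Measure Ω}
    {f g : Ω → ℝ} (hf : 0 ≤ᵐ[μ] f) (hg : 0 ≤ᵐ[μ] g) (hf₂ : MemLp f 2 μ) (hg₂ : MemLp g 2 μ) :
    ∫ x, f x * g x ∂μ ≤ √(∫ x, f x ^ 2 ∂μ) * √(∫ x, g x ^ 2 ∂μ) := by
  have := integral_mul_le_Lp_mul_Lq_of_nonneg Real.HolderConjugate.two_two hf hg
    (by simpa using hf₂) (by simpa using hg₂)
  simpa [Real.sqrt_eq_rpow] using this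

lemma memLp_two_of_integral_sq_pos {Ω : Type*} [MeasurableSpace Ω] {μ : Measure Ω} {f : Ω → ℝ}
    (hf : AEStronglyMeasurable f μ) (hpos : 0 < ∫ x, f x ^ 2 ∂μ) : MemLp f 2 μ :=
  (memLp_two_iff_integrable_sq hf).2 (.of_integral_ne_zero hpos.ne')

lemma abs_sum_integral_Ioc_mul_mul_sub_le {g₁ g₂ ρ : ℝ → ℝ} {K α : ℝ} (hm₁ : Measurable g₁)
    (hm₂ : Measurable g₂) (h₁ : ∀ x > 0, 0 ≤ g₁ x) (h₂ : ∀ x > 0, 0 ≤ g₂ x) (hK : 0 ≤ K)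
    (hα : 0 ≤ α) (hρ : ∀ u v, |ρ u - ρ v| ≤ K * |u - v| ^ α) {n : ℕ}
    (hsq₁ : 0 < ∫ s in Ioc 0 (1 / n : ℝ), g₁ s ^ 2)
    (hsq₂ : 0 < ∫ s in Ioc 0 (1 / n : ℝ), g₂ s ^ 2) :
    |∑ i ∈ Finset.range n, ∫ s in Ioc ((i : ℝ) / n) (((i : ℝ) + 1) / n),
        g₁ (((i : ℝ) + 1) / n - s) * g₂ (((i : ℝ) + 1) / n - s) * (ρ s - ρ ((i : ℝ) / n))|
      ≤ n * (K * (1 / n : ℝ) ^ α *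
        (√(∫ s in Ioc 0 (1 / n : ℝ), g₁ s ^ 2) * √(∫ s in Ioc 0 (1 / n : ℝ), g₂ s ^ 2))) := by
  have hL2₁ := memLp_two_of_integral_sq_pos hm₁.aestronglyMeasurable hsq₁
  have hL2₂ := memLp_two_of_integral_sq_pos hm₂.aestronglyMeasurable hsq₂
  refine (abs_sum_integral_Ioc_mul_sub_le hK hα hρ (fun x hx => mul_nonneg (h₁ x hx) (h₂ x hx))
    (hL2₁.integrable_mul hL2₂)).trans ?_
  gcongr
  exact integral_mul_le_sqrt_mul_sqrt
    (ae_restrict_of_forall_mem measurableSet_Ioc fun s hs => h₁ s hs.1)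
    (ae_restrict_of_forall_mem measurableSet_Ioc fun s hs => h₂ s hs.1) hL2₁ hL2₂

lemma rpow_sub_one_mul_sqrt_mul_sqrt {t : ℝ} (ht : 0 < t) (a b c : ℝ) {u : ℝ} (hu : 0 ≤ u) (v : ℝ) :
    t ^ (c - 1) * (√(t ^ (2 * a + 1) * u) * √(t ^ (2 * b + 1) * v))
      = √(t ^ (c + a + b) * u * (t ^ (c + a + b) * v)) := by
  rw [← Real.sqrt_mul (by positivity), ← Real.sqrt_sq (Real.rpow_nonneg ht.le (c - 1)),
    ← Real.sqrt_mul (sq_nonneg _)]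
  congr 1
  have hpow : (t ^ (c - 1)) ^ 2 * t ^ (2 * a + 1) * t ^ (2 * b + 1)
      = t ^ (c + a + b) * t ^ (c + a + b) := by
    rw [← Real.rpow_natCast, ← Real.rpow_mul ht.le, ← Real.rpow_add ht, ← Real.rpow_add ht,
      ← Real.rpow_add ht]
    ring_nf
  linear_combination u * v * hpow

theorem blocking_error_vanishes_general
    (g1 g2 : ℝ → ℝ) (hmeas1 : Measurable g1) (hmeas2 : Measurable g2)
    (hpos1 : ∀ x > 0, 0 ≤ g1 x) (hpos2 : ∀ x > 0, 0 ≤ g2 x)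
    (δ1 δ2 : ℝ)
    (L1 L2 : ℝ → ℝ)
    (hL1pos : ∀ x > 0, 0 < L1 x) (hL2pos : ∀ x > 0, 0 < L2 x)
    (hL1cont : ContinuousOn L1 (Set.Ioi 0)) (hL2cont : ContinuousOn L2 (Set.Ioi 0))
    (hL1slow : ∀ c > 0, Tendsto (fun t => L1 (c * t) / L1 t)
      (nhdsWithin 0 (Set.Ioi 0)) (nhds 1))
    (hL2slow : ∀ c > 0, Tendsto (fun t => L2 (c * t) / L2 t)
      (nhdsWithin 0 (Set.Ioi 0)) (nhds 1))
    (hint1 : ∀ x > 0, (∫ s in Set.Ioc (0:ℝ) x, (g1 s) ^ 2) = x ^ (2 * δ1 + 1) * L1 x)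
    (hint2 : ∀ x > 0, (∫ s in Set.Ioc (0:ℝ) x, (g2 s) ^ 2) = x ^ (2 * δ2 + 1) * L2 x)
    (α K : ℝ) (hα : α ∈ Set.Ioc (0:ℝ) 1) (hK : 0 ≤ K)
    (ρ : ℝ → ℝ) (hρ : ∀ u v : ℝ, |ρ u - ρ v| ≤ K * |u - v| ^ α)
    (hexp : 0 < α + δ1 + δ2) :
    Tendsto (fun n : ℕ => ∑ i ∈ Finset.range n,
        ∫ s in Set.Ioc ((i:ℝ) / n) (((i:ℝ) + 1) / n),
          g1 (((i:ℝ) + 1) / n - s) * g2 (((i:ℝ) + 1) / n - s) * (ρ s - ρ ((i:ℝ) / n)))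
      atTop (nhds 0) := by
  set e := α + δ1 + δ2
  have hlim : Tendsto (fun t => K * √(t ^ e * L1 t * (t ^ e * L2 t))) (𝓝[>] 0) (𝓝 0) := by
    have h₁ := tendsto_rpow_mul_of_tendsto_half hL1pos hL1cont (hL1slow _ one_half_pos) hexp
    have h₂ := tendsto_rpow_mul_of_tendsto_half hL2pos hL2cont (hL2slow _ one_half_pos) hexp
    simpa using (h₁.mul h₂).sqrt.const_mul K
  have hΔn : Tendsto (fun n : ℕ => (1 / n : ℝ)) atTop (𝓝[>] 0) :=
    tendsto_nhdsWithin_iff.2 ⟨tendsto_one_div_atTop_nhds_zero_nat,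
      (eventually_gt_atTop 0).mono fun n hn => by simp [hn]⟩
  refine squeeze_zero_norm' ?_ (hlim.comp hΔn)
  filter_upwards [eventually_gt_atTop 0] with n hn
  have hΔ : (0 : ℝ) < 1 / n := by positivity
  have hsum := abs_sum_integral_Ioc_mul_mul_sub_le hmeas1 hmeas2 hpos1 hpos2 hK hα.1.le hρ
    (hint1 _ hΔ ▸ mul_pos (Real.rpow_pos_of_pos hΔ _) (hL1pos _ hΔ))
    (hint2 _ hΔ ▸ mul_pos (Real.rpow_pos_of_pos hΔ _) (hL2pos _ hΔ))
  rw [hint1 _ hΔ, hint2 _ hΔ] at hsum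
  refine hsum.trans_eq ?_
  rw [Function.comp_apply, ← rpow_sub_one_mul_sqrt_mul_sqrt hΔ δ1 δ2 α (hL1pos _ hΔ).le,
    Real.rpow_sub_one hΔ.ne']
  field_simp

/-- **Blocking error vanishes (deterministic content of Lemma 5.4).** Let
`g⁽ʲ⁾ : (0,∞) → [0,∞)` be measurable with `∫₀^x (g⁽ʲ⁾)² = x^(2δ⁽ʲ⁾+1) L⁽ʲ⁾(x)` for
continuous, positive functions `L⁽ʲ⁾` slowly varying at zero, `δ⁽ʲ⁾ ∈ (-1/2,1/2)`,
and let `ρ` be `α`-Hölder continuous with `α + δ⁽¹⁾ + δ⁽²⁾ > 0`. Then with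
`Δ_n = 1/n`,
`∑_{i=1}^n ∫_{(i-1)Δ_n}^{iΔ_n} g⁽¹⁾(iΔ_n - s) g⁽²⁾(iΔ_n - s) (ρ s - ρ((i-1)Δ_n)) ds → 0`. -/
theorem blocking_error_vanishes
    (g1 g2 : ℝ → ℝ) (hmeas1 : Measurable g1) (hmeas2 : Measurable g2)
    (hpos1 : ∀ x > 0, 0 ≤ g1 x) (hpos2 : ∀ x > 0, 0 ≤ g2 x)
    (δ1 δ2 : ℝ) (hδ1 : δ1 ∈ Set.Ioo (-(1/2) : ℝ) (1/2))
    (hδ2 : δ2 ∈ Set.Ioo (-(1/2) : ℝ) (1/2))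
    (L1 L2 : ℝ → ℝ)
    (hL1pos : ∀ x > 0, 0 < L1 x) (hL2pos : ∀ x > 0, 0 < L2 x)
    (hL1cont : ContinuousOn L1 (Set.Ioi 0)) (hL2cont : ContinuousOn L2 (Set.Ioi 0))
    (hL1slow : ∀ c > 0, Tendsto (fun t => L1 (c * t) / L1 t)
      (nhdsWithin 0 (Set.Ioi 0)) (nhds 1))
    (hL2slow : ∀ c > 0, Tendsto (fun t => L2 (c * t) / L2 t)
      (nhdsWithin 0 (Set.Ioi 0)) (nhds 1))
    (hint1 : ∀ x > 0, (∫ s in Set.Ioc (0:ℝ) x, (g1 s) ^ 2) = x ^ (2 * δ1 + 1) * L1 x)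
    (hint2 : ∀ x > 0, (∫ s in Set.Ioc (0:ℝ) x, (g2 s) ^ 2) = x ^ (2 * δ2 + 1) * L2 x)
    (α K : ℝ) (hα : α ∈ Set.Ioc (0:ℝ) 1) (hK : 0 ≤ K)
    (ρ : ℝ → ℝ) (hρ : ∀ u v : ℝ, |ρ u - ρ v| ≤ K * |u - v| ^ α)
    (hexp : 0 < α + δ1 + δ2) :
    Tendsto (fun n : ℕ => ∑ i ∈ Finset.range n,
        ∫ s in Set.Ioc ((i:ℝ) / n) (((i:ℝ) + 1) / n),
          g1 (((i:ℝ) + 1) / n - s) * g2 (((i:ℝ) + 1) / n - s) * (ρ s - ρ ((i:ℝ) / n)))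
      atTop (nhds 0) :=
  blocking_error_vanishes_general g1 g2 hmeas1 hmeas2 hpos1 hpos2 δ1 δ2 L1 L2 hL1pos hL2pos hL1cont
    hL2cont hL1slow hL2slow hint1 hint2 α K hα hK ρ hρ hexp
end

section
/- Let g⁽¹⁾, g⁽²⁾ : (0,∞) → [0,∞) be continuous functions such that the product g⁽¹⁾g⁽²⁾ is integrable on (0,1] and the limit c := lim_{x→0⁺} g⁽¹⁾(x)·g⁽²⁾(x) exists and is finite. Let ρ : [0,1] → ℝ be continuous. Then, writing Δ_n = 1/n, Σ_{i=1}^n ∫_{(i−1)Δ_n}^{iΔ_n} g⁽¹⁾(iΔ_n − s) · g⁽²⁾(iΔ_n − s) · ρ(s) ds → c · ∫₀^1 ρ(s) ds as n → ∞. -/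
open MeasureTheory Filter Set intervalIntegral

/-!
Put `K = g⁽¹⁾g⁽²⁾`. On the `i`-th cell `(i/n, (i+1)/n]` the argument `(i+1)/n - s` of `K` lies
in `(0, 1/n)`, so once `1/n` is below the `δ` given by `K(x) → c` for the tolerance `ε`, the `i`-th
summand differs from `c ∫_{cell} ρ` by at most `ε ∫_{cell} |ρ|`. Summing over the cells, the sum
differs from `c ∫₀¹ ρ` by at most `ε ∫₀¹ |ρ|`.
-/

theorem abs_setIntegral_mul_sub_const_mul_le {α : Type*} [MeasurableSpace α] {μ : Measure α}
    {s : Set α} {f g : α → ℝ} {c ε : ℝ} (hs : MeasurableSet s)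
    (hf : AEStronglyMeasurable f (μ.restrict s)) (hg : IntegrableOn g s μ)
    (hfc : ∀ x ∈ s, |f x - c| ≤ ε) :
    |∫ x in s, f x * g x ∂μ - c * ∫ x in s, g x ∂μ| ≤ ε * ∫ x in s, |g x| ∂μ := by
  have hfc_ae : ∀ᵐ x ∂μ.restrict s, |f x - c| ≤ ε :=
    (ae_restrict_mem hs).mono hfc
  have hf_bdd : ∀ᵐ x ∂μ.restrict s, ‖f x‖ ≤ |c| + ε := hfc_ae.mono fun x hx => by
    rw [Real.norm_eq_abs]
    linarith [abs_sub_abs_le_abs_sub (f x) c]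
  have hfg : IntegrableOn (fun x => f x * g x) s μ := hg.bdd_mul hf hf_bdd
  rw [← MeasureTheory.integral_const_mul, ← integral_sub hfg (hg.const_mul c),
    ← MeasureTheory.integral_const_mul, ← Real.norm_eq_abs]
  refine norm_integral_le_of_norm_le (hg.abs.const_mul ε) (hfc_ae.mono fun x hx => ?_)
  rw [Real.norm_eq_abs, ← sub_mul, abs_mul]
  exact mul_le_mul_of_nonneg_right hx (abs_nonneg _)

theorem abs_setIntegral_comp_sub_mul_sub_le {K ρ : ℝ → ℝ} {a b c ε : ℝ} (hab : a ≤ b)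
    (hK : ContinuousOn K (Ioi 0)) (hKc : ∀ x ∈ Ioo 0 (b - a), |K x - c| ≤ ε)
    (hρ : IntervalIntegrable ρ volume a b) :
    |(∫ s in Ioc a b, K (b - s) * ρ s) - c * ∫ s in a..b, ρ s| ≤ ε * ∫ s in a..b, |ρ s| := by
  rw [integral_of_le hab, integral_of_le hab, integral_Ioc_eq_integral_Ioo,
    integral_Ioc_eq_integral_Ioo, integral_Ioc_eq_integral_Ioo]
  have hK_comp : ContinuousOn (fun s => K (b - s)) (Ioo a b) :=
    hK.comp (continuousOn_const.sub continuousOn_id) fun s hs => sub_pos.2 hs.2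
  refine abs_setIntegral_mul_sub_const_mul_le measurableSet_Ioo
    (hK_comp.aestronglyMeasurable measurableSet_Ioo) (hρ.1.mono_set Ioo_subset_Ioc_self)
    fun s hs => hKc _ ⟨sub_pos.2 hs.2, by linarith [hs.1]⟩

theorem intervalIntegrable_uniform_cell {f : ℝ → ℝ} (hf : IntervalIntegrable f volume 0 1)
    {n i : ℕ} (hi : i < n) : IntervalIntegrable f volume (i / n) ((i + 1) / n) := by
  have hn : (0 : ℝ) < n := by exact_mod_cast (Nat.zero_le i).trans_lt hi
  have hin : (i : ℝ) + 1 ≤ n := by exact_mod_cast hi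
  refine hf.mono_set (uIcc_subset_uIcc ?_ ?_) <;> rw [uIcc_of_le zero_le_one] <;>
    refine ⟨by positivity, (div_le_one hn).2 (by linarith)⟩

theorem sum_integral_uniform_partition {f : ℝ → ℝ} (hf : IntervalIntegrable f volume 0 1)
    {n : ℕ} (hn : n ≠ 0) :
    ∑ i ∈ Finset.range n, ∫ s in (i / n : ℝ)..((i + 1) / n), f s = ∫ s in (0 : ℝ)..1, f s := by
  have h := sum_integral_adjacent_intervals (a := fun k : ℕ => (k / n : ℝ)) (μ := volume) (n := n)
    fun k hk => by simpa using intervalIntegrable_uniform_cell hf hk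
  simp only [Nat.cast_zero, zero_div, Nat.cast_add_one] at h
  rwa [div_self (Nat.cast_ne_zero.2 hn)] at h

theorem tendsto_of_forall_eventually_abs_sub_le_mul {ι : Type*} {l : Filter ι} {u : ι → ℝ}
    {L M : ℝ} (hM : 0 ≤ M) (h : ∀ ε > 0, ∀ᶠ n in l, |u n - L| ≤ ε * M) :
    Tendsto u l (nhds L) := by
  refine Metric.tendsto_nhds.2 fun ε hε => ?_
  filter_upwards [h (ε / (M + 1)) (by positivity)] with n hn
  rw [Real.dist_eq]
  calc |u n - L| ≤ ε / (M + 1) * M := hn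
    _ < ε := by rw [div_mul_eq_mul_div, div_lt_iff₀ (by linarith)]; nlinarith

theorem riemann_type_limit_of_kernel_sums_general
    (g1 g2 : ℝ → ℝ)
    (hc1 : ContinuousOn g1 (Set.Ioi 0)) (hc2 : ContinuousOn g2 (Set.Ioi 0))
    (c : ℝ)
    (hlim : Tendsto (fun x => g1 x * g2 x) (nhdsWithin 0 (Set.Ioi 0)) (nhds c))
    (ρ : ℝ → ℝ) (hρ : ContinuousOn ρ (Set.Icc 0 1)) :
    Tendsto (fun n : ℕ => ∑ i ∈ Finset.range n,
        ∫ s in Set.Ioc ((i:ℝ) / n) (((i:ℝ) + 1) / n),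
          g1 (((i:ℝ) + 1) / n - s) * g2 (((i:ℝ) + 1) / n - s) * ρ s)
      atTop (nhds (c * ∫ s in (0:ℝ)..1, ρ s)) := by
  have hρ_int : IntervalIntegrable ρ volume 0 1 :=
    hρ.intervalIntegrable_of_Icc zero_le_one
  refine tendsto_of_forall_eventually_abs_sub_le_mul (M := ∫ s in (0 : ℝ)..1, |ρ s|)
    (integral_nonneg zero_le_one fun _ _ => abs_nonneg _) fun ε hε => ?_
  obtain ⟨δ, hδ, hKδ⟩ := Metric.tendsto_nhdsWithin_nhds.1 hlim ε hε
  filter_upwards [eventually_ne_atTop 0,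
    tendsto_one_div_atTop_nhds_zero_nat.eventually (gt_mem_nhds hδ)] with n hn0 hnδ
  rw [← sum_integral_uniform_partition hρ_int hn0, ← sum_integral_uniform_partition hρ_int.abs hn0,
    Finset.mul_sum, Finset.mul_sum, ← Finset.sum_sub_distrib]
  refine (Finset.abs_sum_le_sum_abs _ _).trans (Finset.sum_le_sum fun i hi => ?_)
  have hcell : ((i : ℝ) + 1) / n - i / n = 1 / n := by ring
  have hKc : ∀ x ∈ Ioo 0 (((i : ℝ) + 1) / n - i / n), |g1 x * g2 x - c| ≤ ε :=
    fun x ⟨hx0, hx⟩ => by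
      rw [← Real.dist_eq]
      refine (hKδ hx0 ?_).le
      rw [Real.dist_eq, sub_zero, abs_of_pos hx0]
      linarith
  exact abs_setIntegral_comp_sub_mul_sub_le (K := fun x => g1 x * g2 x) (by gcongr; linarith)
    (hc1.mul hc2) hKc (intervalIntegrable_uniform_cell hρ_int (Finset.mem_range.1 hi))

/-- If `g⁽¹⁾, g⁽²⁾ : (0,∞) → [0,∞)` are continuous with `g⁽¹⁾g⁽²⁾` integrable on
`(0,1]` and `g⁽¹⁾(x) g⁽²⁾(x) → c` as `x → 0⁺`, and `ρ : [0,1] → ℝ` is continuous,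
then with `Δ_n = 1/n`,
`∑_{i=1}^n ∫_{(i-1)Δ_n}^{iΔ_n} g⁽¹⁾(iΔ_n - s) g⁽²⁾(iΔ_n - s) ρ s ds → c ∫₀¹ ρ`. -/
theorem riemann_type_limit_of_kernel_sums
    (g1 g2 : ℝ → ℝ)
    (hc1 : ContinuousOn g1 (Set.Ioi 0)) (hc2 : ContinuousOn g2 (Set.Ioi 0))
    (hpos1 : ∀ x > 0, 0 ≤ g1 x) (hpos2 : ∀ x > 0, 0 ≤ g2 x)
    (hint : IntegrableOn (fun s => g1 s * g2 s) (Set.Ioc 0 1))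
    (c : ℝ)
    (hlim : Tendsto (fun x => g1 x * g2 x) (nhdsWithin 0 (Set.Ioi 0)) (nhds c))
    (ρ : ℝ → ℝ) (hρ : ContinuousOn ρ (Set.Icc 0 1)) :
    Tendsto (fun n : ℕ => ∑ i ∈ Finset.range n,
        ∫ s in Set.Ioc ((i:ℝ) / n) (((i:ℝ) + 1) / n),
          g1 (((i:ℝ) + 1) / n - s) * g2 (((i:ℝ) + 1) / n - s) * ρ s)
      atTop (nhds (c * ∫ s in (0:ℝ)..1, ρ s)) :=
  riemann_type_limit_of_kernel_sums_general g1 g2 hc1 hc2 c hlim ρ hρ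
end
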